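/- arXiv:2203.04392 — 3 statements merged into one kernel-verified Lean document; each statement's English description precedes it below -/
import Mathlib

section
/- Let A be a transitive permutation group on a set of size 6p (p prime) whose point stabilizers are {2,3}-groups, and suppose A contains a normal subgroup L of order 3 whose orbits all have size 3. Then A contains a semiregular subgroup isomorphic to Z_{3p} with exactly two orbits on the underlying set. -/
/-!
Cauchy's theorem gives `g ∈ A` of order `p`, since `p ∣ 6p ∣ |A|` by transitivity, and a
generator `l` of `L`. Conjugation by `g` is an automorphism of `L ≅ ℤ₃` whose order divides
both `p` and `|Aut ℤ₃| = 2`, so `g` centralizes `L` and `z = l * g` has order `3p`. Nontrivial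
powers of `l` fix no point because the orbits of `L` are regular, and those of `g` because `p`
does not divide the order of a point stabilizer. As the orders of `l` and `g` are coprime, a
point fixed by `zᵏ` is fixed by `lᵏ` and by `gᵏ`, so `⟨z⟩` is semiregular and has
`6p / 3p = 2` orbits.
-/

open Subgroup MulAction

def Subgroup.IsSemiregular {G : Type*} [Group G] (H : Subgroup G) (α : Type*) [MulAction G α] :
    Prop :=
  ∀ h ∈ H, ∀ x : α, h • x = x → h = 1

section

variable {G α : Type*} [Group G] [MulAction G α]

namespace Subgroup.IsSemiregular

variable {H K : Subgroup G}

theorem mono (hK : K.IsSemiregular α) (hHK : H ≤ K) : H.IsSemiregular α :=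
  fun h hh => hK h (hHK hh)

theorem stabilizer_eq_bot (hH : H.IsSemiregular α) (x : α) : stabilizer H x = ⊥ :=
  (eq_bot_iff_forall _).mpr fun h hx => Subtype.ext (hH h h.2 x hx)

theorem card_eq_card_orbits_mul_card (hH : H.IsSemiregular α) :
    Nat.card α = Nat.card (Quotient (orbitRel H α)) * Nat.card H := by
  rw [Nat.card_congr (selfEquivOrbitsQuotientProd hH.stabilizer_eq_bot), Nat.card_prod]

end Subgroup.IsSemiregular

theorem Subgroup.isSemiregular_of_card_orbit_eq {H : Subgroup G} [Finite H]
    (horb : ∀ x : α, Nat.card (orbit H x) = Nat.card H) : H.IsSemiregular α := by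
  intro h hh x hx
  have hindex : (stabilizer H x).index = Nat.card H := by
    rw [index_stabilizer, ← Nat.card_coe_set_eq, horb x]
  have hcard : Nat.card (stabilizer H x) = 1 := by
    have := card_mul_index (stabilizer H x)
    rw [hindex] at this
    exact (Nat.mul_eq_right Nat.card_pos.ne').mp this
  have : (⟨h, hh⟩ : H) ∈ stabilizer H x := hx
  rw [eq_bot_of_card_eq _ hcard] at this
  exact congrArg Subtype.val ((mem_bot).mp this)

theorem Subgroup.isSemiregular_zpowers_of_not_dvd_card_stabilizer {A : Subgroup G} {g : G}
    (hgA : g ∈ A) (hg : (orderOf g).Prime)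
    (hstab : ∀ x : α, ¬ orderOf g ∣ Nat.card (A ⊓ stabilizer G x : Subgroup G)) :
    (zpowers g).IsSemiregular α := by
  intro h hh x hx
  by_contra hne
  have hord : orderOf h = orderOf g :=
    (hg.eq_one_or_self_of_dvd _ (orderOf_dvd_of_mem_zpowers hh)).resolve_left
      (fun h1 => hne (orderOf_eq_one_iff.mp h1))
  exact hstab x (hord ▸ orderOf_dvd_natCard _ ⟨zpowers_le.mpr hgA hh, hx⟩)

theorem Commute.isSemiregular_zpowers_mul {a b : G} (hab : Commute a b)
    (hcop : (orderOf a).Coprime (orderOf b)) (ha : (zpowers a).IsSemiregular α)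
    (hb : (zpowers b).IsSemiregular α) : (zpowers (a * b)).IsSemiregular α := by
  rintro _ ⟨k, rfl⟩ x hx
  have key : ∀ {c d : G}, Commute c d → (orderOf c).Coprime (orderOf d) →
      (zpowers d).IsSemiregular α → (c * d) ^ k ∈ stabilizer G x → d ^ k = 1 := by
    intro c d hcd hcop hd hfix
    have hpow : ((c * d) ^ k) ^ orderOf c = (d ^ k) ^ orderOf c := by
      rw [hcd.mul_zpow, (hcd.zpow_zpow k k).mul_pow,
        orderOf_dvd_iff_pow_eq_one.mp (orderOf_dvd_of_mem_zpowers (zpow_mem (mem_zpowers c) k)),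
        one_mul]
    have hone : (d ^ k) ^ orderOf c = 1 :=
      hd _ (pow_mem (zpow_mem (mem_zpowers d) k) _) x (hpow ▸ pow_mem hfix _)
    exact orderOf_eq_one_iff.mp <| Nat.eq_one_of_dvd_coprimes hcop
      (orderOf_dvd_of_pow_eq_one hone) (orderOf_dvd_of_mem_zpowers (zpow_mem (mem_zpowers d) k))
  have hbk : b ^ k = 1 := key hab hcop hb hx
  have hak : a ^ k = 1 := key hab.symm hcop.symm ha (hab.eq ▸ hx)
  change (a * b) ^ k = 1
  rw [hab.mul_zpow, hak, hbk, one_mul]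

theorem Subgroup.mem_centralizer_of_mem_normalizer_of_coprime {H : Subgroup G} [Finite H]
    [IsCyclic H] {g : G} (hg : g ∈ normalizer (H : Set G))
    (hcop : (orderOf g).Coprime (Nat.card H).totient) :
    g ∈ centralizer (H : Set G) := by
  have hφ : H.normalizerMonoidHom ⟨g, hg⟩ = 1 := by
    refine orderOf_eq_one_iff.mp (Nat.eq_one_of_dvd_coprimes hcop ?_ ?_)
    · exact (orderOf_map_dvd _ _).trans (orderOf_mk g hg).dvd
    · exact IsCyclic.card_mulAut H ▸ _root_.orderOf_dvd_natCard _
  have hker : (⟨g, hg⟩ : normalizer (H : Set G)) ∈ H.normalizerMonoidHom.ker := hφ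
  rw [normalizerMonoidHom_ker] at hker
  exact hker

theorem exists_orderOf_eq_prime_of_isPretransitive [Finite G] [IsPretransitive G α] [Nonempty α]
    {q : ℕ} [Fact q.Prime] (hq : q ∣ Nat.card α) : ∃ g : G, orderOf g = q := by
  obtain ⟨x⟩ := ‹Nonempty α›
  exact exists_prime_orderOf_dvd_card' q
    (hq.trans (index_stabilizer_of_transitive G x ▸ index_dvd_card _))

end

/-- Let `A` be a transitive permutation group on a set of size `6p`
(`p ≥ 5` prime) whose point stabilizers are `{2,3}`-groups, and suppose `A` has a
normal subgroup `L` of order `3` all of whose orbits have size `3`.  Then `A`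
contains a semiregular subgroup isomorphic to `ℤ_{3p}` having exactly two orbits. -/
theorem exists_semiregular_Z3p_subgroup
    {Ω : Type*} [Fintype Ω] {p : ℕ} (hp : p.Prime) (hp5 : 5 ≤ p)
    (hcard : Fintype.card Ω = 6 * p)
    (A : Subgroup (Equiv.Perm Ω))
    (htrans : ∀ x y : Ω, ∃ a ∈ A, a x = y)
    (hstab : ∀ x : Ω, ∀ q : ℕ, q.Prime →
      q ∣ Nat.card (A ⊓ MulAction.stabilizer (Equiv.Perm Ω) x : Subgroup (Equiv.Perm Ω)) →
      q = 2 ∨ q = 3)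
    (L : Subgroup (Equiv.Perm Ω)) (hLA : L ≤ A)
    (hLnormal : ∀ a ∈ A, ∀ l ∈ L, a * l * a⁻¹ ∈ L)
    (hLcard : Nat.card L = 3)
    (hLorb : ∀ x : Ω, Nat.card (MulAction.orbit L x) = 3) :
    ∃ H : Subgroup (Equiv.Perm Ω), H ≤ A ∧
      Nonempty (H ≃* Multiplicative (ZMod (3 * p))) ∧
      (∀ h ∈ H, h ≠ 1 → ∀ x : Ω, h x ≠ x) ∧
      Nat.card (Quotient (MulAction.orbitRel H Ω)) = 2 := by
  have : Fact p.Prime := ⟨hp⟩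
  have : Fact (Nat.Prime 3) := ⟨Nat.prime_three⟩
  have : IsPretransitive A Ω :=
    ⟨fun x y => let ⟨a, ha, hay⟩ := htrans x y; ⟨⟨a, ha⟩, hay⟩⟩
  have : Nonempty Ω := Fintype.card_pos_iff.mp (by omega)
  obtain ⟨⟨g, hgA⟩, hg⟩ := exists_orderOf_eq_prime_of_isPretransitive (G := A) (α := Ω)
    (q := p) (by rw [Nat.card_eq_fintype_card, hcard]; exact dvd_mul_left p 6)
  obtain ⟨⟨l, hlL⟩, hl⟩ := exists_prime_orderOf_dvd_card' (G := L) 3 hLcard.symm.dvd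
  rw [orderOf_mk] at hg hl
  have hLsemi : L.IsSemiregular Ω := isSemiregular_of_card_orbit_eq fun x => by rw [hLorb, hLcard]
  have hgsemi : (zpowers g).IsSemiregular Ω :=
    isSemiregular_zpowers_of_not_dvd_card_stabilizer hgA (hg ▸ hp)
      fun x hdvd => by rcases hstab x p hp (hg ▸ hdvd) with h | h <;> omega
  have hcomm : Commute l g := by
    have := isCyclic_of_prime_card hLcard
    have hLA_normal : (L.subgroupOf A).Normal :=
      (normal_subgroupOf_iff hLA).mpr fun l a hl ha => hLnormal a ha l hl
    have hgC := mem_centralizer_of_mem_normalizer_of_coprime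
      (le_normalizer_of_normal_subgroupOf hLA hgA)
      (by rw [hg, hLcard, Nat.totient_prime Nat.prime_three]
          exact (Nat.coprime_primes hp Nat.prime_two).mpr (by omega))
    exact mem_centralizer_iff.mp hgC l hlL
  have hcop : (orderOf l).Coprime (orderOf g) := by
    rw [hl, hg]; exact (Nat.coprime_primes Nat.prime_three hp).mpr (by omega)
  have hsemi := hcomm.isSemiregular_zpowers_mul hcop (hLsemi.mono (zpowers_le.mpr hlL)) hgsemi
  have hcardH : Nat.card (zpowers (l * g)) = 3 * p := by
    rw [Nat.card_zpowers, hcomm.orderOf_mul_eq_mul_orderOf_of_coprime hcop, hl, hg]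
  refine ⟨zpowers (l * g), zpowers_le.mpr (mul_mem (hLA hlL) hgA),
    ⟨mulEquivOfCyclicCardEq (by simp [hcardH])⟩,
    fun h hh hne x hx => hne (hsemi h hh x hx), ?_⟩
  have horbits := hsemi.card_eq_card_orbits_mul_card
  rw [hcardH, Nat.card_eq_fintype_card, hcard] at horbits
  exact (Nat.eq_of_mul_eq_mul_right (by positivity) (by linarith : 2 * (3 * p) = _)).symm
end

section
/- Every subgroup of index 102 in PSL(2,17) contains an element of order 4. -/
/-!
A subgroup of index 102 in PSL(2, 17) has order 24 = 2³ · 3, so it contains a subgroup P of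
order 8; without elements of order 4, P has exponent 2. Over a field F with char F ≠ 2, the only
involution of SL(2, F) is -1, so two distinct commuting involutions of PSL(2, F) lift to matrices
A, B with A² = B² = -1 and BA = -AB. For three such involutions a, b, c this gives (ABC)² = 1,
hence c = ab: an elementary abelian 2-subgroup of PSL(2, F) has order at most 4.
-/

open Matrix Subgroup
open scoped MatrixGroups

namespace Matrix.SpecialLinearGroup

variable {F : Type*} [Field F]

theorem mem_center_iff_eq_one_or_eq_neg_one {X : SL(2, F)} :
    X ∈ center SL(2, F) ↔ X = 1 ∨ X = -1 := by
  refine ⟨fun hX => ?_, ?_⟩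
  · obtain ⟨r, hr, hrX⟩ := mem_center_iff.mp hX
    rcases sq_eq_one_iff.mp (Fintype.card_fin 2 ▸ hr) with rfl | rfl
    · exact Or.inl (Subtype.ext (hrX.symm.trans (map_one _)))
    · exact Or.inr (Subtype.ext (hrX.symm.trans ((map_neg _ 1).trans (by rw [map_one]; rfl))))
  · rintro (rfl | rfl)
    · exact one_mem _
    · exact Subgroup.mem_center_iff.mpr fun g => by simp

theorem eq_one_or_eq_neg_one_of_mul_self_eq_one (hF : ringChar F ≠ 2) {X : SL(2, F)}
    (hX : X * X = 1) : X = 1 ∨ X = -1 := by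
  have hinv := congrArg (fun g : SL(2, F) => (g : Matrix (Fin 2) (Fin 2) F))
    (inv_eq_of_mul_eq_one_right hX)
  simp only [SL2_inv_expl] at hinv
  have eq_zero_of_neg_eq {x : F} (hx : -x = x) : x = 0 :=
    (mul_eq_zero.mp (by linear_combination -hx : (2 : F) * x = 0)).resolve_left
      (Ring.two_ne_zero hF)
  have h01 : X 0 1 = 0 := eq_zero_of_neg_eq (by simpa using congrFun (congrFun hinv 0) 1)
  have h10 : X 1 0 = 0 := eq_zero_of_neg_eq (by simpa using congrFun (congrFun hinv 1) 0)
  have h11 : X 1 1 = X 0 0 := by simpa using congrFun (congrFun hinv 0) 0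
  refine mem_center_iff_eq_one_or_eq_neg_one.mp (mem_center_iff.mpr ⟨X 0 0, ?_, ?_⟩)
  · have := X.det_coe
    rw [det_fin_two, h01, h11] at this
    simpa [sq] using this
  · ext i j
    fin_cases i <;> fin_cases j <;> simp [h01, h10, h11]

theorem card_mul_card_units {n R : Type*} [Fintype n] [DecidableEq n] [Nonempty n]
    [CommRing R] :
    Nat.card (SpecialLinearGroup n R) * Nat.card Rˣ = Nat.card (GL n R) := by
  have hrange : (toGL : SpecialLinearGroup n R →* GL n R).range =
      (GeneralLinearGroup.det : GL n R →* Rˣ).ker := by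
    ext g
    exact Set.ext_iff.mp range_toGL g
  rw [Nat.card_congr ((MonoidHom.ofInjective toGL_injective).trans
      (MulEquiv.subgroupCongr hrange)).toEquiv,
    ← Nat.card_congr (QuotientGroup.quotientKerEquivOfSurjective _
      (GeneralLinearGroup.det_surjective (n := n) (R := R))).toEquiv,
    mul_comm, ← Subgroup.card_eq_card_quotient_mul_card_subgroup]

theorem card_center_fin_two (hF : ringChar F ≠ 2) :
    Nat.card (center SL(2, F)) = 2 := by
  rw [Nat.card_congr (center_equiv_rootsOfUnity (n := Fin 2) (R := F)).toEquiv]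
  exact (IsPrimitiveRoot.neg_one (ringChar F) hF).card_rootsOfUnity

end Matrix.SpecialLinearGroup

theorem exists_orderOf_eq_four_of_orderOf_dvd_two_pow {G : Type*} [Monoid G] {x : G} {k : ℕ}
    (hx : orderOf x ∣ 2 ^ k) (hx2 : x * x ≠ 1) : ∃ y : G, orderOf y = 4 := by
  obtain ⟨m, -, hm⟩ := (Nat.dvd_prime_pow Nat.prime_two).mp hx
  have hm2 : 2 ≤ m := by
    by_contra! h
    apply hx2
    rw [← pow_two, ← orderOf_dvd_iff_pow_eq_one, hm]
    interval_cases m <;> norm_num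
  refine ⟨x ^ 2 ^ (m - 2), ?_⟩
  rw [orderOf_pow_of_dvd (by positivity) (hm ▸ Nat.pow_dvd_pow 2 (Nat.sub_le m 2)), hm,
    Nat.pow_div (Nat.sub_le m 2) two_pos, Nat.sub_sub_self hm2]
  norm_num

namespace Matrix.ProjectiveSpecialLinearGroup

variable {F : Type*} [Field F]

theorem mk_eq_mk_iff {X Y : SL(2, F)} : (X : PSL(2, F)) = Y ↔ X = Y ∨ X = -Y := by
  rw [QuotientGroup.eq, SpecialLinearGroup.mem_center_iff_eq_one_or_eq_neg_one, inv_mul_eq_one,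
    inv_mul_eq_iff_eq_mul, mul_neg_one, eq_comm (a := Y), neg_eq_iff_eq_neg]

theorem mk_eq_one_iff {X : SL(2, F)} : (X : PSL(2, F)) = 1 ↔ X = 1 ∨ X = -1 :=
  mk_eq_mk_iff

theorem mul_self_eq_neg_one_of_coe (hF : ringChar F ≠ 2) {X : SL(2, F)}
    (hX : (X : PSL(2, F)) * X = 1) (hX1 : (X : PSL(2, F)) ≠ 1) : X * X = -1 := by
  rw [← QuotientGroup.mk_mul, mk_eq_one_iff] at hX
  refine hX.resolve_left fun h => hX1 ?_
  exact mk_eq_one_iff.mpr (SpecialLinearGroup.eq_one_or_eq_neg_one_of_mul_self_eq_one hF h)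

theorem mul_comm_eq_neg_of_coe (hF : ringChar F ≠ 2) {X Y : SL(2, F)}
    (hX : X * X = -1) (hY : Y * Y = -1) (hXY : Commute (X : PSL(2, F)) Y)
    (hne : (X : PSL(2, F)) ≠ Y) : Y * X = -(X * Y) := by
  have := hXY.eq
  rw [← QuotientGroup.mk_mul, ← QuotientGroup.mk_mul, mk_eq_mk_iff] at this
  refine neg_eq_iff_eq_neg.mp (this.resolve_left fun hcomm => hne ?_).symm
  have hsq : X * Y * (X * Y) = 1 := by
    calc X * Y * (X * Y) = X * (Y * X) * Y := by simp only [mul_assoc]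
      _ = X * X * (Y * Y) := by rw [← hcomm]; simp only [mul_assoc]
      _ = 1 := by rw [hX, hY, neg_one_mul, neg_neg]
  have hx : (X : PSL(2, F)) * X = 1 := by rw [← QuotientGroup.mk_mul, hX, mk_eq_one_iff]; simp
  have hxy : (X : PSL(2, F)) * Y = 1 := by
    rw [← QuotientGroup.mk_mul, mk_eq_one_iff]
    exact SpecialLinearGroup.eq_one_or_eq_neg_one_of_mul_self_eq_one hF hsq
  exact mul_left_cancel (hx.trans hxy.symm)

theorem eq_mul_of_pairwise_commute {a b c : PSL(2, F)} (hF : ringChar F ≠ 2)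
    (ha : a * a = 1) (hb : b * b = 1) (hc : c * c = 1)
    (hab : Commute a b) (hac : Commute a c) (hbc : Commute b c)
    (ha1 : a ≠ 1) (hb1 : b ≠ 1) (hc1 : c ≠ 1)
    (hab' : a ≠ b) (hac' : a ≠ c) (hbc' : b ≠ c) :
    c = a * b := by
  obtain ⟨A, rfl⟩ := QuotientGroup.mk_surjective a
  obtain ⟨B, rfl⟩ := QuotientGroup.mk_surjective b
  obtain ⟨C, rfl⟩ := QuotientGroup.mk_surjective c
  have hA := mul_self_eq_neg_one_of_coe hF ha ha1
  have hB := mul_self_eq_neg_one_of_coe hF hb hb1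
  have hC := mul_self_eq_neg_one_of_coe hF hc hc1
  have hBA := mul_comm_eq_neg_of_coe hF hA hB hab hab'
  have hCA := mul_comm_eq_neg_of_coe hF hA hC hac hac'
  have hCB := mul_comm_eq_neg_of_coe hF hB hC hbc hbc'
  have hsq : A * B * C * (A * B * C) = 1 := by
    calc A * B * C * (A * B * C) = A * B * (C * A) * B * C := by simp only [mul_assoc]
      _ = -(A * (B * A) * (C * B) * C) := by rw [hCA]; simp only [mul_assoc, mul_neg, neg_mul]
      _ = -(A * A * (B * B) * (C * C)) := by
        rw [hBA, hCB]; simp only [mul_assoc, mul_neg, neg_mul, neg_neg]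
      _ = 1 := by rw [hA, hB, hC]; simp
  have habc : (A : PSL(2, F)) * B * C = 1 := by
    rw [← QuotientGroup.mk_mul, ← QuotientGroup.mk_mul, mk_eq_one_iff]
    exact SpecialLinearGroup.eq_one_or_eq_neg_one_of_mul_self_eq_one hF hsq
  rw [eq_inv_of_mul_eq_one_right habc, _root_.mul_inv_rev, inv_eq_of_mul_eq_one_right ha,
    inv_eq_of_mul_eq_one_right hb, hab.eq]

theorem card_le_four_of_mul_self_eq_one (hF : ringChar F ≠ 2) (K : Subgroup PSL(2, F))
    (hK : ∀ x ∈ K, x * x = 1) : Nat.card K ≤ 4 := by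
  have hcomm : ∀ x ∈ K, ∀ y ∈ K, Commute x y := fun x hx y hy =>
    calc x * y = (x * y)⁻¹ := (inv_eq_of_mul_eq_one_right (hK _ (K.mul_mem hx hy))).symm
      _ = y * x := by
        rw [_root_.mul_inv_rev, inv_eq_of_mul_eq_one_right (hK x hx),
          inv_eq_of_mul_eq_one_right (hK y hy)]
  by_contra! hK4
  rw [← SetLike.coe_sort_coe, Nat.card_coe_set_eq] at hK4
  obtain ⟨a, haK, ha⟩ := Set.exists_mem_notMem_of_ncard_lt_ncard (s := {1})
    (t := (K : Set PSL(2, F))) (by grind [Set.ncard_singleton]) (Set.toFinite _)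
  obtain ⟨b, hbK, hb⟩ := Set.exists_mem_notMem_of_ncard_lt_ncard (s := {1, a})
    (t := (K : Set PSL(2, F))) (by grind [Set.ncard_insert_le, Set.ncard_singleton])
    (Set.toFinite _)
  obtain ⟨c, hcK, hc⟩ := Set.exists_mem_notMem_of_ncard_lt_ncard (s := {1, a, b, a * b})
    (t := (K : Set PSL(2, F))) (by grind [Set.ncard_insert_le, Set.ncard_singleton])
    (Set.toFinite _)
  simp only [Set.mem_insert_iff, Set.mem_singleton_iff, not_or] at ha hb hc
  exact hc.2.2.2 (eq_mul_of_pairwise_commute hF (hK a haK) (hK b hbK) (hK c hcK)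
    (hcomm a haK b hbK) (hcomm a haK c hcK) (hcomm b hbK c hcK) ha hb.1 hc.1
    (Ne.symm hb.2) (Ne.symm hc.2.1) (Ne.symm hc.2.2.1))

end Matrix.ProjectiveSpecialLinearGroup

instance fact_prime_seventeen : Fact (Nat.Prime 17) := ⟨by norm_num⟩

theorem ringChar_zmod_seventeen_ne_two : ringChar (ZMod 17) ≠ 2 := by
  rw [ZMod.ringChar_zmod_n]; decide

theorem card_PSL_two_zmod_seventeen : Nat.card PSL(2, ZMod 17) = 2448 := by
  show Nat.card (SL(2, ZMod 17) ⧸ center SL(2, ZMod 17)) = 2448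
  have hSL := SpecialLinearGroup.card_mul_card_units (n := Fin 2) (R := ZMod 17)
  rw [card_GL_field, Nat.card_eq_fintype_card (α := (ZMod 17)ˣ), ZMod.card_units, ZMod.card,
    Fin.prod_univ_two, Fin.val_zero, Fin.val_one] at hSL
  have hPSL := card_eq_card_quotient_mul_card_subgroup (center SL(2, ZMod 17))
  rw [SpecialLinearGroup.card_center_fin_two ringChar_zmod_seventeen_ne_two] at hPSL
  norm_num1 at hSL
  omega

/-- Every subgroup of index `102` in `PSL(2,17)` contains an
element of order `4`. -/
theorem PSL2_17_index_102_subgroup_has_order_four_element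
    (H : Subgroup (Matrix.ProjectiveSpecialLinearGroup (Fin 2) (ZMod 17)))
    (hH : H.index = 102) :
    ∃ x : H, orderOf x = 4 := by
  have hH24 : Nat.card H = 2 ^ 3 * 3 := by
    have := H.card_mul_index
    rw [hH, card_PSL_two_zmod_seventeen] at this
    omega
  obtain ⟨P, hP⟩ := Sylow.exists_subgroup_card_pow_prime 2 (hH24 ▸ dvd_mul_right _ _)
  by_contra! hno4
  have hPsq : ∀ x ∈ P.map H.subtype, x * x = 1 := by
    rintro _ ⟨x, hx, rfl⟩
    by_contra hx2
    obtain ⟨y, hy⟩ := exists_orderOf_eq_four_of_orderOf_dvd_two_pow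
      (hP ▸ P.orderOf_dvd_natCard hx)
      (by rwa [← map_mul, ← map_one H.subtype, H.subtype_injective.eq_iff] at hx2)
    exact hno4 y hy
  have := ProjectiveSpecialLinearGroup.card_le_four_of_mul_self_eq_one
    ringChar_zmod_seventeen_ne_two _ hPsq
  rw [card_map_of_injective H.subtype_injective, hP] at this
  omega
end

section
/- Let F be the Frobenius group of order 3p (p prime, p ≡ 1 mod 3), and let S = {x, x⁻¹, y, y⁻¹} ⊆ F be a generating set where x and y have different orders. Then Aut(F,S) = {α ∈ Aut(F) : S^α = S} contains no element of order 3 and no element of order 4; hence Aut(F,S) is trivial, or isomorphic to Z₂ or Z₂ × Z₂. -/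
/-- `Aut(G,S)`: the group of automorphisms of `G` preserving the subset `S`,
as a subgroup of `MulAut G`. -/
def autGS (G : Type*) [Group G] (S : Set G) : Subgroup (MulAut G) where
  carrier := {α | ⇑α '' S = S}
  one_mem' := by simp
  mul_mem' := by
    intro a b ha hb
    have h : ⇑(a * b) = ⇑a ∘ ⇑b := rfl
    show ⇑(a * b) '' S = S
    rw [h, Set.image_comp, hb, ha]
  inv_mem' := by
    intro a ha
    show ⇑a⁻¹ '' S = S
    conv_lhs => rw [← ha, ← Set.image_comp]
    have h : ⇑a⁻¹ ∘ ⇑a = id := funext fun x => a.toEquiv.symm_apply_apply x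
    rw [h, Set.image_id]

/-!
An automorphism preserving `S = {x, x⁻¹, y, y⁻¹}` preserves orders, so when `x` and `y` have
different orders it maps `x` into `{x, x⁻¹}` and `y` into `{y, y⁻¹}`. As `S` generates, such an
automorphism is determined by the pair `(α x, α y)`, whence `|Aut(F,S)| ≤ 4`, and it squares to
the identity on `x` and `y`, hence everywhere. A group of exponent dividing `2` and order at most
`4` is trivial, `ℤ₂` or `ℤ₂ × ℤ₂`.
-/

namespace Monoid

theorem exponent_eq_two_of_forall_sq_eq_one {G : Type*} [Group G] [Nontrivial G]
    (hsq : ∀ g : G, g ^ 2 = 1) : exponent G = 2 := by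
  rcases (Nat.dvd_prime Nat.prime_two).1 (exponent_dvd_of_forall_pow_eq_one hsq) with h | h
  · exact absurd (exp_eq_one_iff.1 h) (not_subsingleton G)
  · exact h

end Monoid

theorem card_ne_three_of_forall_sq_eq_one {G : Type*} [Group G] (hsq : ∀ g : G, g ^ 2 = 1) :
    Nat.card G ≠ 3 := by
  intro h3
  have : Finite G := Nat.finite_of_card_ne_zero (by omega)
  have : Fact (Nat.Prime 3) := ⟨Nat.prime_three⟩
  obtain ⟨g, hg⟩ := exists_prime_orderOf_dvd_card' (G := G) 3 (by rw [h3])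
  have := orderOf_dvd_of_pow_eq_one (hsq g)
  rw [hg] at this
  omega

theorem card_eq_one_or_mulEquiv_of_forall_sq_eq_one {G : Type*} [Group G] [Finite G]
    (hsq : ∀ g : G, g ^ 2 = 1) (hcard : Nat.card G ≤ 4) :
    Nat.card G = 1 ∨ Nonempty (G ≃* Multiplicative (ZMod 2)) ∨
      Nonempty (G ≃* Multiplicative (ZMod 2) × Multiplicative (ZMod 2)) := by
  have hpos : 0 < Nat.card G := Nat.card_pos
  have hne3 := card_ne_three_of_forall_sq_eq_one hsq
  interval_cases hc : Nat.card G
  · exact Or.inl rfl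
  · have : Fact (Nat.Prime 2) := ⟨Nat.prime_two⟩
    exact Or.inr (Or.inl ⟨mulEquivOfPrimeCardEq hc (by simp)⟩)
  · exact absurd rfl hne3
  · have : Nontrivial G := Finite.one_lt_card_iff_nontrivial.1 (by omega)
    have : IsKleinFour G := ⟨hc, Monoid.exponent_eq_two_of_forall_sq_eq_one hsq⟩
    exact Or.inr (Or.inr
      ⟨IsKleinFour.nonempty_mulEquiv.some.trans (MulEquiv.prodMultiplicative _ _)⟩)

theorem Set.ncard_pair_le {α : Type*} (a b : α) : ({a, b} : Set α).ncard ≤ 2 :=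
  (Set.ncard_insert_le a {b}).trans (by rw [Set.ncard_singleton])

theorem MulAut.ext_of_closure_eq_top {G : Type*} [Group G] {s : Set G}
    (hs : Subgroup.closure s = ⊤) {α β : MulAut G} (h : ∀ g ∈ s, α g = β g) : α = β :=
  MulEquiv.toMonoidHom_injective (MonoidHom.eq_of_eqOn_dense hs h)

section Generators

variable {G : Type*} [Group G] {x y : G}

theorem MulAut.ext_of_closure_pair_inv_eq_top
    (hgen : Subgroup.closure ({x, x⁻¹, y, y⁻¹} : Set G) = ⊤) {α β : MulAut G}
    (hx : α x = β x) (hy : α y = β y) : α = β :=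
  MulAut.ext_of_closure_eq_top hgen (by rintro g (rfl | rfl | rfl | rfl) <;> simp [hx, hy])

theorem apply_mem_of_mem_autGS {S : Set G} {α : MulAut G} (hα : α ∈ autGS G S) {g : G}
    (hg : g ∈ S) : α g ∈ S :=
  (show ⇑α '' S = S from hα) ▸ Set.mem_image_of_mem α hg

theorem apply_eq_or_eq_inv_of_mem_autGS (hxy : orderOf x ≠ orderOf y) {α : MulAut G}
    (hα : α ∈ autGS G {x, x⁻¹, y, y⁻¹}) : α x = x ∨ α x = x⁻¹ := by
  have hord : orderOf (α x) = orderOf x := orderOf_injective α.toMonoidHom α.injective x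
  rcases apply_mem_of_mem_autGS hα (g := x) (by simp) with h | h | h | h
  · exact Or.inl h
  · exact Or.inr h
  · exact absurd (by rw [← hord, h]) hxy
  · exact absurd (by rw [← hord, h, orderOf_inv]) hxy

theorem pair_inv_insert_comm : ({x, x⁻¹, y, y⁻¹} : Set G) = {y, y⁻¹, x, x⁻¹} := by
  ext g
  simp only [Set.mem_insert_iff, Set.mem_singleton_iff]
  tauto

theorem apply_apply_eq_self_of_eq_or_eq_inv {α : MulAut G} (h : α x = x ∨ α x = x⁻¹) :
    α (α x) = x := by
  rcases h with h | h <;> simp [h]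

theorem sq_eq_one_of_mem_autGS (hxy : orderOf x ≠ orderOf y)
    (hgen : Subgroup.closure ({x, x⁻¹, y, y⁻¹} : Set G) = ⊤) {α : MulAut G}
    (hα : α ∈ autGS G {x, x⁻¹, y, y⁻¹}) : α ^ 2 = 1 :=
  MulAut.ext_of_closure_pair_inv_eq_top hgen
    (apply_apply_eq_self_of_eq_or_eq_inv (apply_eq_or_eq_inv_of_mem_autGS hxy hα))
    (apply_apply_eq_self_of_eq_or_eq_inv
      (apply_eq_or_eq_inv_of_mem_autGS hxy.symm (pair_inv_insert_comm (x := x) ▸ hα)))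

def autGSRestrict (hxy : orderOf x ≠ orderOf y) (α : autGS G {x, x⁻¹, y, y⁻¹}) :
    ({x, x⁻¹} : Set G) × ({y, y⁻¹} : Set G) :=
  (⟨α.1 x, apply_eq_or_eq_inv_of_mem_autGS hxy α.2⟩,
    ⟨α.1 y, apply_eq_or_eq_inv_of_mem_autGS hxy.symm (pair_inv_insert_comm (x := x) ▸ α.2)⟩)

theorem autGSRestrict_injective (hxy : orderOf x ≠ orderOf y)
    (hgen : Subgroup.closure ({x, x⁻¹, y, y⁻¹} : Set G) = ⊤) :
    Function.Injective (autGSRestrict hxy) := fun _ _ h =>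
  Subtype.ext (MulAut.ext_of_closure_pair_inv_eq_top hgen
    (congrArg (fun q => q.1.1) h) (congrArg (fun q => q.2.1) h))

theorem card_autGS_le_four (hxy : orderOf x ≠ orderOf y)
    (hgen : Subgroup.closure ({x, x⁻¹, y, y⁻¹} : Set G) = ⊤) :
    Nat.card (autGS G {x, x⁻¹, y, y⁻¹}) ≤ 4 :=
  calc Nat.card (autGS G {x, x⁻¹, y, y⁻¹})
      ≤ Nat.card (({x, x⁻¹} : Set G) × ({y, y⁻¹} : Set G)) :=
        Nat.card_le_card_of_injective _ (autGSRestrict_injective hxy hgen)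
    _ ≤ 2 * 2 := by
        rw [Nat.card_prod, Nat.card_coe_set_eq, Nat.card_coe_set_eq]
        exact Nat.mul_le_mul (Set.ncard_pair_le _ _) (Set.ncard_pair_le _ _)

end Generators

theorem autGS_of_frobenius_3p_general
    (F : Type*) [Group F] (x y : F) (hxy : orderOf x ≠ orderOf y)
    (hgen : Subgroup.closure ({x, x⁻¹, y, y⁻¹} : Set F) = ⊤) :
    (∀ α ∈ autGS F ({x, x⁻¹, y, y⁻¹} : Set F), orderOf α ≠ 3 ∧ orderOf α ≠ 4) ∧
      (Nat.card (autGS F ({x, x⁻¹, y, y⁻¹} : Set F)) = 1 ∨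
        Nonempty ((autGS F ({x, x⁻¹, y, y⁻¹} : Set F)) ≃* Multiplicative (ZMod 2)) ∨
        Nonempty ((autGS F ({x, x⁻¹, y, y⁻¹} : Set F)) ≃*
          Multiplicative (ZMod 2) × Multiplicative (ZMod 2))) := by
  have hsq (α : autGS F ({x, x⁻¹, y, y⁻¹} : Set F)) : α ^ 2 = 1 :=
    Subtype.ext (sq_eq_one_of_mem_autGS hxy hgen α.2)
  have : Finite (autGS F ({x, x⁻¹, y, y⁻¹} : Set F)) :=
    Finite.of_injective _ (autGSRestrict_injective hxy hgen)
  refine ⟨fun α hα => ?_, card_eq_one_or_mulEquiv_of_forall_sq_eq_one hsq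
    (card_autGS_le_four hxy hgen)⟩
  have := Nat.le_of_dvd two_pos (orderOf_dvd_of_pow_eq_one (sq_eq_one_of_mem_autGS hxy hgen hα))
  omega

/-- Let `F` be the Frobenius group of order `3p` (the nonabelian
group of order `3p`, `p ≡ 1 (mod 3)` prime), and let `S = {x, x⁻¹, y, y⁻¹}` be a
generating set of `F` where `x` and `y` have different orders.  Then `Aut(F,S)`
has no element of order `3` and no element of order `4`; hence it is trivial, or
isomorphic to `ℤ₂` or to `ℤ₂ × ℤ₂`. -/
theorem autGS_of_frobenius_3p
    (F : Type*) [Group F] [Finite F] {p : ℕ} (hp : p.Prime) (hp3 : p % 3 = 1)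
    (hcard : Nat.card F = 3 * p) (hnab : ∃ a b : F, a * b ≠ b * a)
    (x y : F) (hxy : orderOf x ≠ orderOf y)
    (hgen : Subgroup.closure ({x, x⁻¹, y, y⁻¹} : Set F) = ⊤) :
    (∀ α ∈ autGS F ({x, x⁻¹, y, y⁻¹} : Set F), orderOf α ≠ 3 ∧ orderOf α ≠ 4) ∧
      (Nat.card (autGS F ({x, x⁻¹, y, y⁻¹} : Set F)) = 1 ∨
        Nonempty ((autGS F ({x, x⁻¹, y, y⁻¹} : Set F)) ≃* Multiplicative (ZMod 2)) ∨
        Nonempty ((autGS F ({x, x⁻¹, y, y⁻¹} : Set F)) ≃*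
          Multiplicative (ZMod 2) × Multiplicative (ZMod 2))) :=
  autGS_of_frobenius_3p_general F x y hxy hgen
end
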